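/- If p ∈ R_1 with p(θ_0) = 0 and p(θ_1) = 1 and θ_0, θ_1 satisfy |θ_0 - θ_1| = π/2 (with θ_0 = 0, θ_1 = π/2), then p is uniquely determined: p(θ) = sin²θ. -/

import Mathlib

open Real

/-! Since `p` takes values in `[0, 1]`, `0` is a global minimum and `π/2` a global maximum of `p`,
so `p'` vanishes at both. With the values at `0`, `π/2` and the bounds `p(π) ≥ 0`, `p(-π/2) ≤ 1`,
this is a linear system in the five coefficients forcing `p = 1/2 - cos(2θ)/2 = sin²θ`. -/

/-- `p` is a real trigonometric polynomial of degree at most 2. -/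
def IsTrigPoly2 (p : ℝ → ℝ) : Prop :=
  ∃ c0 c1 s1 c2 s2 : ℝ, ∀ θ : ℝ,
    p θ = c0 + c1 * Real.cos θ + s1 * Real.sin θ
      + c2 * Real.cos (2 * θ) + s2 * Real.sin (2 * θ)

noncomputable def trigPoly2 (c0 c1 s1 c2 s2 θ : ℝ) : ℝ :=
  c0 + c1 * cos θ + s1 * sin θ + c2 * cos (2 * θ) + s2 * sin (2 * θ)

section

variable (c0 c1 s1 c2 s2 : ℝ)

theorem hasDerivAt_trigPoly2 (θ : ℝ) :
    HasDerivAt (trigPoly2 c0 c1 s1 c2 s2)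
      (-c1 * sin θ + s1 * cos θ - 2 * c2 * sin (2 * θ) + 2 * s2 * cos (2 * θ)) θ := by
  have hlin : HasDerivAt (fun θ : ℝ => 2 * θ) 2 θ := by
    simpa using (hasDerivAt_id θ).const_mul (2 : ℝ)
  have h := ((((hasDerivAt_const θ c0).add ((hasDerivAt_cos θ).const_mul c1)).add
    ((hasDerivAt_sin θ).const_mul s1)).add (((hasDerivAt_cos (2 * θ)).comp θ hlin).const_mul c2)).add
    (((hasDerivAt_sin (2 * θ)).comp θ hlin).const_mul s2)
  exact h.congr_deriv (by ring)

@[simp]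
theorem trigPoly2_zero : trigPoly2 c0 c1 s1 c2 s2 0 = c0 + c1 + c2 := by
  simp [trigPoly2]

@[simp]
theorem trigPoly2_pi_div_two : trigPoly2 c0 c1 s1 c2 s2 (π / 2) = c0 + s1 - c2 := by
  simp [trigPoly2, mul_div_cancel₀]
  ring

@[simp]
theorem trigPoly2_pi : trigPoly2 c0 c1 s1 c2 s2 π = c0 - c1 + c2 := by
  simp [trigPoly2]
  ring

@[simp]
theorem trigPoly2_neg_pi_div_two : trigPoly2 c0 c1 s1 c2 s2 (-(π / 2)) = c0 - s1 - c2 := by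
  simp [trigPoly2, mul_div_cancel₀]
  ring

theorem trigPoly2_half_neg_half (θ : ℝ) : trigPoly2 (1 / 2) 0 0 (-(1 / 2)) 0 θ = sin θ ^ 2 := by
  rw [trigPoly2, sin_sq_eq_half_sub]
  ring

variable {c0 c1 s1 c2 s2}

theorem trigPoly2_coeffs_of_unit_interval
    (hb : ∀ θ, trigPoly2 c0 c1 s1 c2 s2 θ ∈ Set.Icc (0 : ℝ) 1)
    (h0 : trigPoly2 c0 c1 s1 c2 s2 0 = 0) (h1 : trigPoly2 c0 c1 s1 c2 s2 (π / 2) = 1) :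
    c0 = 1 / 2 ∧ c1 = 0 ∧ s1 = 0 ∧ c2 = -(1 / 2) ∧ s2 = 0 := by
  have hmin : IsLocalMin (trigPoly2 c0 c1 s1 c2 s2) 0 :=
    .of_forall fun θ => by rw [h0]; exact (hb θ).1
  have hmax : IsLocalMax (trigPoly2 c0 c1 s1 c2 s2) (π / 2) :=
    .of_forall fun θ => by rw [h1]; exact (hb θ).2
  have hd0 := hmin.hasDerivAt_eq_zero (hasDerivAt_trigPoly2 c0 c1 s1 c2 s2 0)
  have hd1 := hmax.hasDerivAt_eq_zero (hasDerivAt_trigPoly2 c0 c1 s1 c2 s2 (π / 2))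
  simp only [mul_zero, sin_zero, cos_zero, mul_div_cancel₀ π two_ne_zero, sin_pi_div_two,
    cos_pi_div_two, sin_pi, cos_pi] at hd0 hd1
  have hπ := (hb π).1
  have hnegπ := (hb (-(π / 2))).2
  simp only [trigPoly2_zero, trigPoly2_pi_div_two, trigPoly2_pi, trigPoly2_neg_pi_div_two]
    at h0 h1 hπ hnegπ
  refine ⟨?_, ?_, ?_, ?_, ?_⟩ <;> linarith

end

theorem stmt11 (p : ℝ → ℝ) (hp : IsTrigPoly2 p)
    (hb : ∀ θ : ℝ, p θ ∈ Set.Icc (0 : ℝ) 1)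
    (h0 : p 0 = 0) (h1 : p (Real.pi / 2) = 1) :
    ∀ θ : ℝ, p θ = Real.sin θ ^ 2 := by
  obtain ⟨c0, c1, s1, c2, s2, hp⟩ := hp
  obtain rfl : p = trigPoly2 c0 c1 s1 c2 s2 := funext hp
  obtain ⟨rfl, rfl, rfl, rfl, rfl⟩ := trigPoly2_coeffs_of_unit_interval hb h0 h1
  exact trigPoly2_half_neg_half
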